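/- For a cycle σ of length t on a multiset of labels from {1,...,n}, with cycle graph γ_σ, the automorphism group Aut(γ_σ) (label-preserving rotations) is cyclic, generated by σ^s for some divisor s of t, and has order t/s. Moreover, summing over all non-isomorphic labeled cycle graphs of length t, Σ_{γ_σ: |σ|=t} s(γ_σ) · w_1(γ_σ) = Tr(A^t), where w_1(γ_σ) is the product of edge weights A_{ij} over the edges of γ_σ and s(γ_σ) = t/|Aut(γ_σ)|. -/
import Mathlib


open scoped Classical

noncomputable section

/-- A labeled cycle graph of length `t` with labels in `Fin n` is a function
`f : ZMod t → Fin n`; its automorphism group consists of the rotations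
`c : ZMod t` preserving all labels. -/
def cycAut {t n : ℕ} [NeZero t] (f : ZMod t → Fin n) : Finset (ZMod t) :=
  Finset.univ.filter fun c => ∀ i, f (i + c) = f i

/-- The weight `w₁(γ_σ)` of a labeled cycle graph: the product of the edge
weights `A_{f(i), f(i+1)}`. -/
def cycWeight {t n : ℕ} [NeZero t] {R : Type*} [CommRing R]
    (A : Matrix (Fin n) (Fin n) R) (f : ZMod t → Fin n) : R :=
  ∏ i : ZMod t, A (f i) (f (i + 1))

lemma cycAut_spec {t n : ℕ} [NeZero t] (f : ZMod t → Fin n) :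
    ∃ s : ℕ, s ∣ t ∧ (cycAut f).card = t / s ∧
      ∀ c : ZMod t, c ∈ cycAut f ↔ ∃ m : ℕ, c = (m : ZMod t) * (s : ZMod t) := by
  have ht : (t : ℕ) ≠ 0 := NeZero.ne t
  set H : AddSubgroup (ZMod t) :=
    { carrier := {c | ∀ i, f (i + c) = f i}
      zero_mem' := by intro i; simp
      add_mem' := by
        intro c d hc hd i
        rw [← add_assoc, hd (i + c)]
        exact hc i
      neg_mem' := by
        intro c hc i
        have h := hc (i + -c)
        rw [neg_add_cancel_right] at h
        exact h.symm } with hHdef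
  have hmem : ∀ c, c ∈ cycAut f ↔ c ∈ H := by
    intro c
    simp only [cycAut, Finset.mem_filter, Finset.mem_univ, true_and]
    rfl
  obtain ⟨g, hg⟩ := IsAddCyclic.exists_generator (α := H)
  set z : ZMod t := (g : ZMod t) with hz
  set a : ℕ := z.val with ha
  set s : ℕ := Nat.gcd t a with hs
  have hza : (a : ZMod t) = z := ZMod.natCast_rightInverse z
  have hHz : H = AddSubgroup.zmultiples z := by
    ext x
    constructor
    · intro hx
      obtain ⟨k, hk⟩ := hg ⟨x, hx⟩
      exact ⟨k, congrArg Subtype.val hk⟩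
    · rintro ⟨k, rfl⟩
      exact AddSubgroup.zsmul_mem H g.2 k
  have hzs : AddSubgroup.zmultiples z = AddSubgroup.zmultiples ((s : ℕ) : ZMod t) := by
    apply le_antisymm
    · rw [AddSubgroup.zmultiples_le]
      refine ⟨((a / s : ℕ) : ℤ), ?_⟩
      beta_reduce
      rw [natCast_zsmul, nsmul_eq_mul, ← Nat.cast_mul, Nat.div_mul_cancel (Nat.gcd_dvd_right t a), hza]
    · rw [AddSubgroup.zmultiples_le]
      refine ⟨Nat.gcdB t a, ?_⟩
      beta_reduce
      have hb : ((s : ℤ) : ZMod t) = ((t : ℤ) : ZMod t) * (Nat.gcdA t a : ZMod t)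
          + ((a : ℤ) : ZMod t) * (Nat.gcdB t a : ZMod t) := by
        rw [← Int.cast_mul, ← Int.cast_mul, ← Int.cast_add, ← Nat.gcd_eq_gcd_ab]
      push_cast at hb
      rw [ZMod.natCast_self, zero_mul, zero_add, hza] at hb
      rw [zsmul_eq_mul, mul_comm]
      exact hb.symm
  have hcard : (cycAut f).card = Nat.card H := by
    have hset : (H : Set (ZMod t)) = ↑(cycAut f) := by
      ext c
      rw [Finset.mem_coe, hmem c]
      rfl
    rw [← SetLike.coe_sort_coe, hset, Nat.card_coe_set_eq, Set.ncard_coe_finset]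
  refine ⟨s, Nat.gcd_dvd_left t a, ?_, ?_⟩
  · rw [hcard, hHz, hzs, Nat.card_zmultiples, ZMod.addOrderOf_coe s ht,
      Nat.gcd_eq_right (Nat.gcd_dvd_left t a)]
  · intro c
    rw [hmem, hHz, hzs]
    constructor
    · rintro ⟨k, rfl⟩
      refine ⟨(k % (t : ℤ)).toNat, ?_⟩
      have h0 : (0 : ℤ) ≤ k % (t : ℤ) := Int.emod_nonneg k (by exact_mod_cast ht)
      have h1 : (((k % (t : ℤ)).toNat : ℕ) : ZMod t) = ((k % (t : ℤ) : ℤ) : ZMod t) := by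
        rw [← Int.cast_natCast, Int.toNat_of_nonneg h0]
      have h2 : ((k % (t : ℤ) : ℤ) : ZMod t) = ((k : ℤ) : ZMod t) := by
        conv_rhs => rw [← Int.mul_ediv_add_emod k (t : ℤ)]
        push_cast
        rw [ZMod.natCast_self, zero_mul, zero_add]
      beta_reduce
      rw [zsmul_eq_mul, h1, h2]
    · rintro ⟨m, rfl⟩
      exact ⟨(m : ℤ), by beta_reduce; rw [natCast_zsmul, nsmul_eq_mul]⟩


section Paths

variable {n : ℕ} {R : Type*} [CommRing R] (A : Matrix (Fin n) (Fin n) R)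

def pw {t : ℕ} (g : Fin (t+1) → Fin n) : R := ∏ k : Fin t, A (g k.castSucc) (g k.succ)

lemma pow_entry (t : ℕ) (i j : Fin n) :
    (A ^ t) i j = ∑ g : Fin (t+1) → Fin n,
      if g 0 = i ∧ g (Fin.last t) = j then pw A g else 0 := by
  induction t generalizing i j with
  | zero =>
    have h1 : ∑ g : Fin 1 → Fin n, (if g 0 = i ∧ g (Fin.last 0) = j then pw A g else 0)
        = ∑ x : Fin n, (if x = i ∧ x = j then (1:R) else 0) := by
      refine (Fintype.sum_equiv (Equiv.funUnique (Fin 1) (Fin n)).symm _ _ ?_).symm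
      intro x
      simp [pw]
    rw [pow_zero, h1, Matrix.one_apply]
    simp only [ite_and]
    rw [Finset.sum_ite_eq' Finset.univ i (fun x => if x = j then (1:R) else 0)]
    simp
  | succ t ih =>
    have lhs : (A * A ^ t) i j
        = ∑ g : Fin (t+1) → Fin n, if g (Fin.last t) = j then A i (g 0) * pw A g else 0 := by
      rw [Matrix.mul_apply]
      simp_rw [ih, Finset.mul_sum, mul_ite, mul_zero]
      rw [Finset.sum_comm]
      refine Finset.sum_congr rfl fun g _ => ?_
      simp_rw [ite_and]
      rw [Finset.sum_ite_eq Finset.univ (g 0)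
        (fun k => if g (Fin.last t) = j then A i k * pw A g else 0)]
      simp
    have rhs : ∑ h : Fin (t+2) → Fin n, (if h 0 = i ∧ h (Fin.last (t+1)) = j then pw A h else 0)
        = ∑ p : Fin n × (Fin (t+1) → Fin n),
          (if p.1 = i ∧ p.2 (Fin.last t) = j then A p.1 (p.2 0) * pw A p.2 else 0) := by
      refine (Fintype.sum_equiv (Fin.consEquiv fun _ => Fin n) _ _ ?_).symm
      rintro ⟨x, g⟩
      have hc0 : Fin.cons (α := fun _ => Fin n) x g 0 = x := rfl
      have hcl : Fin.cons (α := fun _ => Fin n) x g (Fin.last (t+1)) = g (Fin.last t) := by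
        rw [← Fin.succ_last, Fin.cons_succ]
      have hpw : pw A (Fin.cons x g) = A x (g 0) * pw A g := by
        rw [pw, Fin.prod_univ_succ]
        congr 1
      have he : (Fin.consEquiv fun _ => Fin n) (x, g) = Fin.cons x g := rfl
      simp only [he, hc0, hcl, hpw]
    rw [pow_succ', lhs, rhs, Fintype.sum_prod_type, Finset.sum_comm]
    refine Finset.sum_congr rfl fun g _ => ?_
    simp_rw [ite_and]
    rw [Finset.sum_ite_eq' Finset.univ i
      (fun x => if g (Fin.last t) = j then A x (g 0) * pw A g else 0)]
    simp

lemma trace_pow (t : ℕ) :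
    Matrix.trace (A ^ t) = ∑ g : Fin (t+1) → Fin n,
      if g (Fin.last t) = g 0 then pw A g else 0 := by
  rw [Matrix.trace]
  simp only [Matrix.diag]
  simp_rw [pow_entry]
  rw [Finset.sum_comm]
  refine Finset.sum_congr rfl fun g _ => ?_
  simp_rw [ite_and]
  rw [Finset.sum_ite_eq Finset.univ (g 0)
    (fun x => if g (Fin.last t) = x then pw A g else 0)]
  simp

lemma trace_eq_cyc (m : ℕ) :
    Matrix.trace (A ^ (m+1)) = ∑ g : Fin (m+1) → Fin n, ∏ k : Fin (m+1), A (g k) (g (k+1)) := by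
  rw [trace_pow]
  have h1 : ∑ h : Fin (m+2) → Fin n, (if h (Fin.last (m+1)) = h 0 then pw A h else 0)
      = ∑ p : Fin n × (Fin (m+1) → Fin n),
        (if p.1 = p.2 0 then pw A (Fin.snoc p.2 p.1) else 0) := by
    refine (Fintype.sum_equiv (Fin.snocEquiv fun _ => Fin n) _ _ ?_).symm
    rintro ⟨y, g⟩
    have h0 : Fin.snoc (α := fun _ => Fin n) g y 0 = g 0 := by
      simp [Fin.snoc, Fin.castPred_zero]
    have he : (Fin.snocEquiv fun _ => Fin n) (y, g) = Fin.snoc g y := rfl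
    simp only [he, Fin.snoc_last, h0]
  rw [h1, Fintype.sum_prod_type, Finset.sum_comm]
  refine Finset.sum_congr rfl fun g _ => ?_
  rw [Finset.sum_ite_eq' Finset.univ (g 0) (fun y => pw A (Fin.snoc g y))]
  simp only [Finset.mem_univ, if_true]
  rw [pw]
  refine Finset.prod_congr rfl fun k _ => ?_
  rw [Fin.snoc_castSucc]
  congr 1
  by_cases hk : k = Fin.last m
  · subst hk
    rw [Fin.succ_last, Fin.snoc_last, Fin.last_add_one]
  · obtain ⟨j, rfl⟩ := Fin.exists_castSucc_eq.mpr hk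
    rw [Fin.succ_castSucc, Fin.snoc_castSucc, Fin.coeSucc_eq_succ]


def zv (t : ℕ) [NeZero t] : Fin t ≃ ZMod t where
  toFun k := (k.val : ZMod t)
  invFun x := ⟨x.val, x.val_lt⟩
  left_inv k := by
    ext
    simp [ZMod.val_natCast_of_lt k.isLt]
  right_inv x := ZMod.natCast_rightInverse x

lemma zv_add_one (m : ℕ) (k : Fin (m+1)) : zv (m+1) k + 1 = zv (m+1) (k + 1) := by
  show ((k.val : ZMod (m+1)) + 1 = (((k+1 : Fin (m+1)).val : ℕ) : ZMod (m+1)))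
  have h1 : (((1 : Fin (m+1)).val : ℕ) : ZMod (m+1)) = 1 := by
    rw [Fin.val_one', ZMod.natCast_mod, Nat.cast_one]
  rw [Fin.val_add, ZMod.natCast_mod, Nat.cast_add, h1]

lemma trace_eq_sum_cycWeight (t : ℕ) [NeZero t] :
    Matrix.trace (A ^ t) = ∑ f : ZMod t → Fin n, cycWeight A f := by
  obtain ⟨m, rfl⟩ := Nat.exists_eq_succ_of_ne_zero (NeZero.ne t)
  rw [trace_eq_cyc]
  refine (Fintype.sum_equiv (Equiv.arrowCongr (zv (m+1)).symm (Equiv.refl (Fin n))) _ _ ?_).symm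
  intro f
  simp only [Equiv.arrowCongr_apply, Equiv.refl_apply, Function.comp, Equiv.symm_symm,
    Equiv.coe_refl, id_eq]
  rw [cycWeight]
  refine (Fintype.prod_equiv (zv (m+1)) _ _ fun k => ?_).symm
  rw [← zv_add_one m k]

end Paths

/-- (a) The automorphism group of a cycle graph of length `t` is cyclic,
generated by the rotation `σ^s` for some divisor `s` of `t`, of order `t/s`.
(b) The trace identity: for any set `Rep` of representatives of the
rotation-isomorphism classes of labeled cycle graphs of length `t`,
`Σ_{γ_σ} s(γ_σ) w₁(γ_σ) = Tr(A^t)` where `s(γ_σ) = t / |Aut(γ_σ)|`. -/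
theorem cycle_aut_and_trace_identity {R : Type*} [CommRing R]
    (t n : ℕ) [NeZero t] (A : Matrix (Fin n) (Fin n) R) :
    (∀ f : ZMod t → Fin n, ∃ s : ℕ, s ∣ t ∧ (cycAut f).card = t / s ∧
      ∀ c : ZMod t, c ∈ cycAut f ↔ ∃ m : ℕ, c = (m : ZMod t) * (s : ZMod t)) ∧
    ∀ Rep : Finset (ZMod t → Fin n),
      (∀ f : ZMod t → Fin n, ∃! g, g ∈ Rep ∧ ∃ c : ZMod t, (fun i => f (i + c)) = g) →
      ∑ f ∈ Rep, ((t / (cycAut f).card : ℕ) : R) * cycWeight A f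
        = Matrix.trace (A ^ t) := by
  constructor
  · exact cycAut_spec
  intro Rep hR
  rw [trace_eq_sum_cycWeight]
  set rot : (ZMod t → Fin n) → ZMod t → (ZMod t → Fin n) := fun f c => fun i => f (i + c)
    with hrot
  have hRu : ∀ f y, (y ∈ Rep ∧ ∃ c, rot f c = y) → y = (hR f).choose := fun f y hy =>
    (hR f).choose_spec.2 y hy
  set r : (ZMod t → Fin n) → (ZMod t → Fin n) := fun f => (hR f).choose with hr
  have hr1 : ∀ f, r f ∈ Rep ∧ ∃ c, rot f c = r f := fun f => (hR f).choose_spec.1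
  have hA : ∀ f ∈ Rep, r f = f := by
    intro f hf
    exact (hRu f f ⟨hf, 0, by funext i; simp [hrot]⟩).symm
  have hB : ∀ f c, r (rot f c) = r f := by
    intro f c
    obtain ⟨c', hc'⟩ := (hr1 f).2
    refine (hRu (rot f c) (r f) ⟨(hr1 f).1, c' - c, ?_⟩).symm
    funext i
    rw [← hc']
    show f (i + (c' - c) + c) = f (i + c')
    congr 1
    abel
  have hW : ∀ f c, cycWeight A (rot f c) = cycWeight A f := by
    intro f c
    rw [cycWeight, cycWeight]
    refine Fintype.prod_equiv (Equiv.addRight c) _ _ fun i => ?_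
    simp only [hrot, Equiv.coe_addRight]
    have h1 : i + 1 + c = i + c + 1 := by abel
    rw [h1]
  have hfib : ∀ f d, (Finset.univ.filter fun c => rot f c = rot f d).card = (cycAut f).card := by
    intro f d
    refine Finset.card_bij (fun c _ => c - d) ?_ ?_ ?_
    · intro c hc
      rw [Finset.mem_filter] at hc
      rw [cycAut, Finset.mem_filter]
      refine ⟨Finset.mem_univ _, fun i => ?_⟩
      have h := congrFun hc.2 (i - d)
      show f (i + (c - d)) = f i
      calc f (i + (c - d)) = f (i - d + c) := by congr 1; abel
        _ = f (i - d + d) := h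
        _ = f i := by congr 1; abel
    · intro a _ b _ h
      exact sub_left_injective h
    · intro e he
      rw [cycAut, Finset.mem_filter] at he
      refine ⟨e + d, Finset.mem_filter.mpr ⟨Finset.mem_univ _, ?_⟩, add_sub_cancel_right e d⟩
      funext i
      show f (i + (e + d)) = f (i + d)
      calc f (i + (e + d)) = f (i + d + e) := by congr 1; abel
        _ = f (i + d) := he.2 (i + d)
  have horb : ∀ f, (Finset.univ.image (rot f)).card * (cycAut f).card = t := by
    intro f
    have h := Finset.card_eq_sum_card_image (rot f) Finset.univ
    rw [Finset.card_univ, ZMod.card t] at h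
    conv_rhs => rw [h]
    rw [Finset.sum_congr rfl fun b hb => ?_, Finset.sum_const, smul_eq_mul]
    obtain ⟨d, _, rfl⟩ := Finset.mem_image.mp hb
    exact hfib f d
  have hfibr : ∀ f ∈ Rep, Finset.univ.filter (fun h => r h = f) = Finset.univ.image (rot f) := by
    intro f hf
    ext h
    rw [Finset.mem_filter, Finset.mem_image]
    constructor
    · rintro ⟨-, rfl⟩
      obtain ⟨c, hc⟩ := (hr1 h).2
      refine ⟨-c, Finset.mem_univ _, ?_⟩
      funext i
      rw [← hc]
      show h (i + -c + c) = h i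
      congr 1
      abel
    · rintro ⟨c, -, rfl⟩
      rw [hB f c, hA f hf]
      exact ⟨Finset.mem_univ _, rfl⟩
  rw [← Finset.sum_fiberwise_of_maps_to (g := r) (fun h _ => (hr1 h).1) (cycWeight A)]
  refine Finset.sum_congr rfl fun f hf => ?_
  rw [hfibr f hf]
  have hsum : ∑ h ∈ Finset.univ.image (rot f), cycWeight A h
      = ((Finset.univ.image (rot f)).card : R) * cycWeight A f := by
    rw [Finset.sum_congr rfl fun h hh => ?_, Finset.sum_const, nsmul_eq_mul]
    obtain ⟨c, -, rfl⟩ := Finset.mem_image.mp hh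
    exact hW f c
  rw [hsum]
  congr 2
  have hob := horb f
  have hpos : 0 < (cycAut f).card := by
    refine Finset.card_pos.mpr ⟨0, ?_⟩
    rw [cycAut, Finset.mem_filter]
    exact ⟨Finset.mem_univ _, fun i => by rw [add_zero]⟩
  exact Nat.div_eq_of_eq_mul_left hpos hob.symm
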